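/- arXiv:1703.05519 — 5 statements merged into one kernel-verified Lean document; each statement's English description precedes it below -/
import Mathlib

section
/- Let ≻ be represented by a skew-symmetric bilinear function φ on Δ × Δ. Then every nonempty compact convex subset X of Δ contains a maximal element, i.e., there exists p ∈ X with φ(p,q) ≥ 0 for all q ∈ X. -/
/-- The SSB value of two lotteries given a matrix of pairwise utilities. -/
def phi {U : Type*} [Fintype U] (M : U → U → ℝ) (p q : U → ℝ) : ℝ :=
  ∑ a, ∑ b, p a * q b * M a b

/-!
For finitely many `q₁, …, qₙ ∈ X` the matrix `(φ(qₖ, qₗ))` is skew-symmetric, so the symmetric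
zero-sum game it defines has value `0`: some mixture `w` of the `qₖ` satisfies `φ(∑ wₖ qₖ, qₗ) ≥ 0`
for every `l`, and `∑ wₖ qₖ ∈ X` by convexity. The value of such a game is obtained by separating
the image of the simplex under `w ↦ w ᵥ* A` from the nonnegative orthant: the separating
functional is `z ↦ z ⬝ᵥ y` with `y ≥ 0`, and `y ⬝ᵥ A *ᵥ y = 0` rules out `A *ᵥ y < 0`.
The closed sets `{p ∈ X | φ(p, q) ≥ 0}` thus have the finite intersection property, and
compactness of `X` finishes the proof.
-/

open Matrix

theorem nonneg_of_forall_lt_mul {a v : ℝ} (h : ∀ t, 0 ≤ t → v < t * a) : 0 ≤ a := by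
  by_contra! ha
  have hv : v < 0 := by simpa using h 0 le_rfl
  have := h (v / a) (div_nonneg_of_nonpos hv.le ha.le)
  rw [div_mul_cancel₀ v ha.ne] at this
  exact lt_irrefl v this

section Phi

variable {U : Type*} [Fintype U] {M : U → U → ℝ}

theorem phi_eq_dotProduct_mulVec (M : U → U → ℝ) (p q : U → ℝ) :
    phi M p q = p ⬝ᵥ (of M *ᵥ q) := by
  simp only [phi, dotProduct, mulVec, of_apply, Finset.mul_sum]
  exact Finset.sum_congr rfl fun a _ => Finset.sum_congr rfl fun b _ => by ring

theorem phi_swap (hM : ∀ a b, M a b = -M b a) (p q : U → ℝ) : phi M p q = -phi M q p := by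
  have hMt : (of M)ᵀ = -of M := Matrix.ext fun a b => hM b a
  rw [phi_eq_dotProduct_mulVec, phi_eq_dotProduct_mulVec, dotProduct_mulVec, ← mulVec_transpose,
    hMt, neg_mulVec, neg_dotProduct, dotProduct_comm]

theorem phi_self (hM : ∀ a b, M a b = -M b a) (p : U → ℝ) : phi M p p = 0 := by
  linarith [phi_swap hM p p]

theorem phi_sum_smul_left (M : U → U → ℝ) {κ : Type*} (s : Finset κ) (w : κ → ℝ)
    (g : κ → U → ℝ) (q : U → ℝ) :
    phi M (∑ k ∈ s, w k • g k) q = ∑ k ∈ s, w k * phi M (g k) q := by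
  simp only [phi_eq_dotProduct_mulVec, sum_dotProduct, smul_dotProduct, smul_eq_mul]

theorem continuous_phi_left (M : U → U → ℝ) (q : U → ℝ) :
    Continuous fun p => phi M p q := by
  simp only [phi_eq_dotProduct_mulVec]
  exact continuous_id.dotProduct continuous_const

end Phi

section SkewSymmetricGame

variable {ι : Type*} [Fintype ι] {A : Matrix ι ι ℝ}

theorem exists_nonneg_mulVec_apply [Nonempty ι] (hA : ∀ i j, A i j = -A j i) {y : ι → ℝ}
    (hy : 0 ≤ y) : ∃ i, 0 ≤ (A *ᵥ y) i := by
  by_contra! hneg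
  have hterm : ∀ i, y i * (A *ᵥ y) i ≤ 0 := fun i =>
    mul_nonpos_of_nonneg_of_nonpos (hy i) (hneg i).le
  have hsum : ∑ i, y i * (A *ᵥ y) i = 0 :=
    (phi_eq_dotProduct_mulVec A y y).symm.trans (phi_self hA y)
  have hy0 : y = 0 := funext fun i =>
    (mul_eq_zero.1 ((Finset.sum_eq_zero_iff_of_nonpos fun i _ => hterm i).1 hsum i
      (Finset.mem_univ i))).resolve_right (hneg i).ne
  obtain ⟨i⟩ := ‹Nonempty ι›
  simpa [hy0] using hneg i

theorem exists_mem_stdSimplex_nonneg_vecMul [Nonempty ι] (hA : ∀ i j, A i j = -A j i) :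
    ∃ w ∈ stdSimplex ℝ ι, 0 ≤ w ᵥ* A := by
  classical
  by_contra! h
  have hdisj : Disjoint (vecMulLinear A '' stdSimplex ℝ ι) (Set.Ici 0) :=
    Set.disjoint_left.2 fun _ ⟨w, hw, hwA⟩ hnonneg => h w hw (by subst hwA; exact hnonneg)
  obtain ⟨f, u, v, hfD, huv, hfP⟩ := geometric_hahn_banach_compact_closed
    ((convex_stdSimplex ℝ ι).linear_image _)
    ((isCompact_stdSimplex ℝ ι).image (LinearMap.continuous_of_finiteDimensional _))
    (convex_Ici 0) isClosed_Ici hdisj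
  set y : ι → ℝ := fun j => f (Pi.single j 1)
  have hf : ∀ z, f z = z ⬝ᵥ y := fun z => by
    conv_lhs => rw [← Finset.univ_sum_single z]
    have hsingle : ∀ j, Pi.single j (z j) = z j • Pi.single j (1 : ℝ) := fun j => by
      rw [← Pi.single_smul', smul_eq_mul, mul_one]
    simp only [map_sum, hsingle, map_smul, smul_eq_mul, dotProduct, y]
  have hv : v < 0 := by simpa using hfP 0 Set.self_mem_Ici
  have hy : 0 ≤ y := fun j => nonneg_of_forall_lt_mul fun t ht => by
    simpa [y] using hfP (t • Pi.single j 1)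
      (Set.mem_Ici.2 (smul_nonneg ht (Pi.single_nonneg.2 zero_le_one)))
  obtain ⟨i, hi⟩ := exists_nonneg_mulVec_apply hA hy
  have := hfD _ ⟨Pi.single i 1, single_mem_stdSimplex ℝ i, rfl⟩
  rw [coe_vecMulLinear, hf, ← dotProduct_mulVec, single_one_dotProduct] at this
  linarith

end SkewSymmetricGame

theorem exists_mem_forall_phi_nonneg_of_fintype {U : Type*} [Fintype U] {M : U → U → ℝ}
    (hM : ∀ a b, M a b = -M b a) {X : Set (U → ℝ)} (hX : Convex ℝ X) (hXne : X.Nonempty)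
    {κ : Type*} [Fintype κ] (q : κ → U → ℝ) (hq : ∀ k, q k ∈ X) :
    ∃ p ∈ X, ∀ k, 0 ≤ phi M p (q k) := by
  cases isEmpty_or_nonempty κ with
  | inl _ =>
    obtain ⟨p, hp⟩ := hXne
    exact ⟨p, hp, isEmptyElim⟩
  | inr _ =>
    obtain ⟨w, hw, hwA⟩ := exists_mem_stdSimplex_nonneg_vecMul
      (A := Matrix.of fun k l => phi M (q k) (q l)) fun k l => phi_swap hM _ _
    have hpX : ∑ k, w k • q k ∈ X := hX.sum_mem (fun k _ => hw.1 k) hw.2 fun k _ => hq k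
    refine ⟨_, hpX, fun l => ?_⟩
    rw [phi_sum_smul_left]
    exact hwA l

theorem ssb_maximal_element_exists_general {U : Type*} [Fintype U]
    (M : U → U → ℝ) (hskew : ∀ a b, M a b = - M b a)
    (X : Set (U → ℝ)) (hXne : X.Nonempty) (hXcp : IsCompact X)
    (hXcv : Convex ℝ X) :
    ∃ p ∈ X, ∀ q ∈ X, phi M p q ≥ 0 := by
  obtain ⟨p, hpX, hp⟩ := hXcp.inter_iInter_nonempty (fun q : X => {p | 0 ≤ phi M p q})
    (fun q => isClosed_le continuous_const (continuous_phi_left M q)) fun t => by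
      obtain ⟨p, hpX, hp⟩ := exists_mem_forall_phi_nonneg_of_fintype hskew hXcv hXne
        (fun k : t => (k : X).1) fun k => (k : X).2
      exact ⟨p, hpX, Set.mem_iInter₂.2 fun q hq => hp ⟨q, hq⟩⟩
  exact ⟨p, hpX, fun q hq => Set.mem_iInter.1 hp ⟨q, hq⟩⟩

/-- Every nonempty compact convex subset of the simplex contains a maximal
element of an SSB preference relation. -/
theorem ssb_maximal_element_exists {U : Type*} [Fintype U]
    (M : U → U → ℝ) (hskew : ∀ a b, M a b = - M b a)
    (X : Set (U → ℝ)) (hXne : X.Nonempty) (hXcp : IsCompact X)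
    (hXcv : Convex ℝ X) (hXsub : X ⊆ stdSimplex ℝ U) :
    ∃ p ∈ X, ∀ q ∈ X, phi M p q ≥ 0 :=
  ssb_maximal_element_exists_general M hskew X hXne hXcp hXcv
end

section
/- For the PC (pairwise comparison) preference relation induced by the strict linear order a ≻₀ b ≻₀ c ≻₀ d on four alternatives, the three lotteries p = c (pure), q = (2/5)a + (3/5)d, and r = (3/5)b + (2/5)d form a strict preference cycle: p ≻ q, q ≻ r, and r ≻ p. -/
section PairwiseComparison

variable {U : Type*} [Fintype U] [LinearOrder U]

/-- The pairwise-comparison matrix of the order in which `x` is preferred to `y` iff `x < y`. -/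
def pcMatrix (x y : U) : ℝ :=
  if x < y then 1 else if y < x then -1 else 0

theorem phi_pcMatrix (p q : U → ℝ) :
    phi pcMatrix p q =
      ∑ x, ∑ y, (if x < y then p x * q y else 0) - ∑ x, ∑ y, (if x < y then q x * p y else 0) := by
  have hsplit : ∀ x y, p x * q y * pcMatrix x y =
      (if x < y then p x * q y else 0) - (if y < x then q y * p x else 0) := by
    intro x y
    rcases lt_trichotomy x y with h | rfl | h
    · simp [pcMatrix, h, h.not_gt]
    · simp [pcMatrix]
    · simp [pcMatrix, h, h.not_gt, mul_comm]
  simp only [phi, hsplit, Finset.sum_sub_distrib]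
  rw [Finset.sum_comm (f := fun x y => if y < x then q y * p x else 0)]

end PairwiseComparison

/-- Steinhaus–Trybula paradox: for the PC extension of the linear order
a ≻ b ≻ c ≻ d (alternatives 0,1,2,3), the lotteries p = c,
q = (2/5)a + (3/5)d, and r = (3/5)b + (2/5)d form a strict cycle. -/
theorem pc_cycle :
    let M : Fin 4 → Fin 4 → ℝ := fun i j => if i < j then 1 else if j < i then -1 else 0
    let p : Fin 4 → ℝ := ![0, 0, 1, 0]
    let q : Fin 4 → ℝ := ![2/5, 0, 0, 3/5]
    let r : Fin 4 → ℝ := ![0, 3/5, 0, 2/5]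
    phi M p q > 0 ∧ phi M q r > 0 ∧ phi M r p > 0 := by
  intro M p q r
  change phi pcMatrix p q > 0 ∧ phi pcMatrix q r > 0 ∧ phi pcMatrix r p > 0
  have hpq : phi pcMatrix p q = 1/5 := by
    simp [phi_pcMatrix, p, q, Fin.sum_univ_four]; norm_num
  have hqr : phi pcMatrix q r = 1/25 := by
    simp [phi_pcMatrix, q, r, Fin.sum_univ_four]; norm_num
  have hrp : phi pcMatrix r p = 1/5 := by
    simp [phi_pcMatrix, r, p, Fin.sum_univ_four]; norm_num
  norm_num [hpq, hqr, hrp]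
end

section
/- If a choice function S on the family of nonempty compact convex subsets of Δ is rationalizable by a preference relation ≻ (i.e., S(X) = max_≻ X for all feasible X) whose weak lower contour sets L(p) ∪ I(p) are convex, then S satisfies expansion: for all feasible X, Y, S(X) ∩ S(Y) ⊆ S(conv(X ∪ Y)). -/
/-- A feasible set: a nonempty compact convex subset of the simplex. -/
def feasible {U : Type*} [Fintype U] (X : Set (U → ℝ)) : Prop :=
  X.Nonempty ∧ IsCompact X ∧ Convex ℝ X ∧ X ⊆ stdSimplex ℝ U

/-! An element maximal in both `X` and `Y` lies in the weak lower contour set of itself, which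
contains `X ∪ Y` and is convex, hence contains `conv (X ∪ Y)`; so no element of the hull is
preferred to it. The only other point is that `conv (X ∪ Y)` is again feasible: for convex `X`, `Y`
it is the union of the segments joining them, a continuous image of `[0, 1] × X × Y`. -/

lemma convexJoin_eq_image {E : Type*} [AddCommGroup E] [Module ℝ E] (X Y : Set E) :
    convexJoin ℝ X Y =
      (fun p : ℝ × E × E => (1 - p.1) • p.2.1 + p.1 • p.2.2) '' (Set.Icc 0 1 ×ˢ X ×ˢ Y) := by
  ext z
  simp only [mem_convexJoin, segment_eq_image, Set.mem_image, Set.mem_prod, Prod.exists]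
  constructor
  · rintro ⟨a, ha, b, hb, t, ht, rfl⟩
    exact ⟨t, a, b, ⟨ht, ha, hb⟩, rfl⟩
  · rintro ⟨t, a, b, ⟨ht, ha, hb⟩, rfl⟩
    exact ⟨a, ha, b, hb, t, ht, rfl⟩

lemma IsCompact.convexJoin {E : Type*} [AddCommGroup E] [Module ℝ E]
    [TopologicalSpace E] [IsTopologicalAddGroup E] [ContinuousSMul ℝ E]
    {X Y : Set E} (hX : IsCompact X) (hY : IsCompact Y) :
    IsCompact (convexJoin ℝ X Y) := by
  rw [convexJoin_eq_image]
  exact (isCompact_Icc.prod (hX.prod hY)).image (by fun_prop)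

lemma feasible_convexHull_union {U : Type*} [Fintype U] {X Y : Set (U → ℝ)}
    (hX : feasible X) (hY : feasible Y) : feasible (convexHull ℝ (X ∪ Y)) := by
  obtain ⟨hXne, hXc, hXcv, hXΔ⟩ := hX
  obtain ⟨hYne, hYc, hYcv, hYΔ⟩ := hY
  refine ⟨(hXne.mono Set.subset_union_left).convexHull, ?_, convex_convexHull ℝ _,
    convexHull_min (Set.union_subset hXΔ hYΔ) (convex_stdSimplex ℝ U)⟩
  rw [hXcv.convexHull_union hYcv hXne hYne]
  exact hXc.convexJoin hYc

lemma not_pref_of_mem_convexHull {E : Type*} [AddCommGroup E] [Module ℝ E]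
    {pref : E → E → Prop} {D s : Set E} {x : E}
    (hconv : Convex ℝ {q | q ∈ D ∧ ¬ pref q x}) (hsD : s ⊆ D) (hmax : ∀ y ∈ s, ¬ pref y x)
    {y : E} (hy : y ∈ convexHull ℝ s) : ¬ pref y x :=
  (convexHull_min (fun q hq => (⟨hsD hq, hmax q hq⟩ : q ∈ D ∧ ¬ pref q x)) hconv hy).2

theorem rationalizable_expansion_general {U : Type*} [Fintype U]
    (pref : (U → ℝ) → (U → ℝ) → Prop)
    (hconv : ∀ p ∈ stdSimplex ℝ U, Convex ℝ {q | q ∈ stdSimplex ℝ U ∧ ¬ pref q p})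
    (S : Set (U → ℝ) → Set (U → ℝ))
    (hrat : ∀ X, feasible X → S X = {x ∈ X | ∀ y ∈ X, ¬ pref y x})
    (X Y : Set (U → ℝ)) (hX : feasible X) (hY : feasible Y) :
    S X ∩ S Y ⊆ S (convexHull ℝ (X ∪ Y)) := by
  rw [hrat X hX, hrat Y hY, hrat _ (feasible_convexHull_union hX hY)]
  rintro x ⟨⟨hxX, hmaxX⟩, -, hmaxY⟩
  refine ⟨subset_convexHull ℝ _ (Or.inl hxX), fun y hy => ?_⟩
  refine not_pref_of_mem_convexHull (hconv x (hX.2.2.2 hxX))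
    (Set.union_subset hX.2.2.2 hY.2.2.2) ?_ hy
  rintro q (hq | hq)
  exacts [hmaxX q hq, hmaxY q hq]

/-- A choice function rationalized by a preference relation with convex weak
lower contour sets satisfies expansion. -/
theorem rationalizable_expansion {U : Type*} [Fintype U]
    (pref : (U → ℝ) → (U → ℝ) → Prop)
    (hasym : ∀ p q, pref p q → ¬ pref q p)
    (hconv : ∀ p ∈ stdSimplex ℝ U, Convex ℝ {q | q ∈ stdSimplex ℝ U ∧ ¬ pref q p})
    (S : Set (U → ℝ) → Set (U → ℝ))
    (hrat : ∀ X, feasible X → S X = {x ∈ X | ∀ y ∈ X, ¬ pref y x})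
    (X Y : Set (U → ℝ)) (hX : feasible X) (hY : feasible Y) :
    S X ∩ S Y ⊆ S (convexHull ℝ (X ∪ Y)) :=
  rationalizable_expansion_general pref hconv S hrat X Y hX hY
end

section
/- Let ≻ be represented by a skew-symmetric bilinear φ on the simplex Δ. Then ≻ satisfies symmetry: for all p, q, r ∈ Δ and λ ∈ (0,1), if q ∼ (1/2)p + (1/2)r and λp + (1−λ)r ∼ (1/2)p + (1/2)q, then λr + (1−λ)p ∼ (1/2)r + (1/2)q. -/
theorem phi_eq_toLinearMap₂' {U : Type*} [Fintype U] [DecidableEq U] (M : U → U → ℝ)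
    (p q : U → ℝ) :
    phi M p q = Matrix.toLinearMap₂' ℝ (Matrix.of M) p q := by
  simp only [phi, Matrix.toLinearMap₂'_apply, Matrix.of_apply, smul_eq_mul, mul_assoc]

theorem Matrix.isAlt_toLinearMap₂'_of_forall_eq_neg {R n : Type*} [CommRing R] [NoZeroDivisors R]
    [CharZero R] [Fintype n] [DecidableEq n] {A : Matrix n n R} (hA : ∀ i j, A i j = -A j i) :
    (Matrix.toLinearMap₂' R A : (n → R) →ₗ[R] (n → R) →ₗ[R] R).IsAlt := by
  intro x
  rw [Matrix.toLinearMap₂'_apply, ← self_eq_neg, ← Finset.sum_neg_distrib, Finset.sum_comm]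
  refine Finset.sum_congr rfl fun j _ => ?_
  rw [← Finset.sum_neg_distrib]
  refine Finset.sum_congr rfl fun i _ => ?_
  rw [hA, smul_neg, smul_neg, smul_comm (x i)]

theorem LinearMap.IsAlt.fishburn_symmetry {R M : Type*} [CommRing R] [AddCommGroup M] [Module R M]
    {B : M →ₗ[R] M →ₗ[R] R} (hB : B.IsAlt) {p q r : M} (l c : R)
    (h₁ : B q (c • p + c • r) = 0) (h₂ : B (l • p + (1 - l) • r) (c • p + c • q) = 0) :
    B (l • r + (1 - l) • p) (c • r + c • q) = 0 := by
  have hqp := hB.neg q p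
  have hqr := hB.neg q r
  have hrp := hB.neg r p
  simp only [map_add, map_smul, LinearMap.add_apply, LinearMap.smul_apply, smul_eq_mul,
    hB.self_eq_zero] at h₁ h₂ ⊢
  -- After bilinear expansion, the conclusion plus `h₂` is `-h₁` up to skew-symmetry terms.
  linear_combination -h₂ - h₁ - (1 - l) * c * hrp - c * hqp - c * hqr

theorem ssb_symmetry_general {U : Type*} [Fintype U]
    (M : U → U → ℝ) (hskew : ∀ a b, M a b = - M b a)
    (p q r : U → ℝ) (l : ℝ)
    (h1 : phi M q ((1/2 : ℝ) • p + (1/2 : ℝ) • r) = 0)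
    (h2 : phi M (l • p + (1 - l) • r) ((1/2 : ℝ) • p + (1/2 : ℝ) • q) = 0) :
    phi M (l • r + (1 - l) • p) ((1/2 : ℝ) • r + (1/2 : ℝ) • q) = 0 := by
  classical
  rw [phi_eq_toLinearMap₂'] at h1 h2 ⊢
  exact (Matrix.isAlt_toLinearMap₂'_of_forall_eq_neg hskew).fishburn_symmetry l _ h1 h2

/-- Fishburn's symmetry axiom holds for SSB preferences. -/
theorem ssb_symmetry {U : Type*} [Fintype U]
    (M : U → U → ℝ) (hskew : ∀ a b, M a b = - M b a)
    (p q r : U → ℝ) (hp : p ∈ stdSimplex ℝ U) (hq : q ∈ stdSimplex ℝ U)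
    (hr : r ∈ stdSimplex ℝ U) (l : ℝ) (hl : l ∈ Set.Ioo (0:ℝ) 1)
    (h1 : phi M q ((1/2 : ℝ) • p + (1/2 : ℝ) • r) = 0)
    (h2 : phi M (l • p + (1 - l) • r) ((1/2 : ℝ) • p + (1/2 : ℝ) • q) = 0) :
    phi M (l • r + (1 - l) • p) ((1/2 : ℝ) • r + (1/2 : ℝ) • q) = 0 :=
  ssb_symmetry_general M hskew p q r l h1 h2
end

section
/- Suppose ≻ and ≻' are two preference relations on Δ each represented by a nonzero skew-symmetric bilinear function (φ and ψ respectively), and suppose the indifference relation of ≻ is contained in that of ≻' (φ(p,q)=0 implies ψ(p,q)=0 for all p,q). If moreover φ(p,q) > 0 implies ψ(p,q) > 0 for at least one pair (p,q) with φ(p,q) > 0 and ψ never flips sign relative to φ, then conclude: ≻' ∈ {≻, ≻⁻¹, ∅}; specifically, there exists α ∈ ℝ such that ψ = αφ. -/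
/-!
The argument works for alternating bilinear forms `φ`, `ψ` on any convex set `S`. For fixed `x`,
if `φ x y` and `φ x z` have opposite signs, some convex combination `w` of `y` and `z` has
`φ x w = 0`, hence `ψ x w = 0`, and this gives `φ x y * ψ x z = φ x z * ψ x y`. For `m` strictly
between `q` and `r`, the values `φ m q` and `φ m r` have opposite signs, so the identity at base
point `m` reaches every `p`; as it is affine in `m`, two choices of `m` give it at the endpoint `q`.
Knowing `φ x y * ψ x z = φ x z * ψ x y` for all `x y z ∈ S`, one pair with `φ p q ≠ 0` pins down
`ψ = (ψ p q / φ p q) • φ` on `S`.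
-/

namespace LinearMap.BilinForm

section Alternating

variable {R M : Type*} [CommRing R] [AddCommGroup M] [Module R M] {B : LinearMap.BilinForm R M}

theorem IsAlt.apply_smul_add_smul_self_left (hB : B.IsAlt) (a b : R) (x y : M) :
    B (a • x + b • y) x = -(b * B x y) := by
  rw [map_add₂, map_smul₂, map_smul₂, hB.self_eq_zero, ← hB.neg_eq, smul_eq_mul, smul_eq_mul]
  ring

theorem IsAlt.apply_smul_add_smul_self_right (hB : B.IsAlt) (a b : R) (x y : M) :
    B (a • x + b • y) y = a * B x y := by
  rw [map_add₂, map_smul₂, map_smul₂, hB.self_eq_zero, smul_eq_mul, smul_eq_mul]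
  ring

end Alternating

variable {𝕜 E : Type*} [Field 𝕜] [LinearOrder 𝕜] [IsStrictOrderedRing 𝕜]
  [AddCommGroup E] [Module 𝕜 E] {φ ψ : LinearMap.BilinForm 𝕜 E} {S : Set E}

theorem apply_mul_apply_eq_of_mul_nonpos (hS : Convex 𝕜 S)
    (hzero : ∀ x ∈ S, ∀ y ∈ S, φ x y = 0 → ψ x y = 0) {x y z : E}
    (hx : x ∈ S) (hy : y ∈ S) (hz : z ∈ S) (hyz : φ x y * φ x z ≤ 0) :
    φ x y * ψ x z = φ x z * ψ x y := by
  obtain h | hd := eq_or_ne (φ x y) (φ x z)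
  · have hy0 : φ x y = 0 := by nlinarith
    rw [← h, hzero x hx y hy hy0, hzero x hx z hz (h ▸ hy0)]
  set d := φ x y - φ x z
  have hd : d ≠ 0 := sub_ne_zero.2 hd
  obtain ⟨ha, hb⟩ : 0 ≤ -φ x z / d ∧ 0 ≤ φ x y / d := by
    rcases mul_nonpos_iff.1 hyz with h | h
    · exact ⟨div_nonneg (by linarith) (by linarith), div_nonneg h.1 (by linarith)⟩
    · exact ⟨div_nonneg_of_nonpos (by linarith) (by linarith),
        div_nonneg_of_nonpos h.1 (by linarith)⟩
  have hw : (-φ x z / d) • y + (φ x y / d) • z ∈ S := hS hy hz ha hb (by field_simp; ring)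
  have hψw := hzero x hx _ hw (by simp only [map_add, map_smul, smul_eq_mul]; field_simp; ring)
  simp only [map_add, map_smul, smul_eq_mul] at hψw
  field_simp at hψw
  linear_combination hψw

theorem apply_smul_add_smul_mul_eq (hφ : φ.IsAlt) (hψ : ψ.IsAlt) (hS : Convex 𝕜 S)
    (hzero : ∀ x ∈ S, ∀ y ∈ S, φ x y = 0 → ψ x y = 0) {p q r : E}
    (hp : p ∈ S) (hq : q ∈ S) (hr : r ∈ S) {a b : 𝕜} (ha : 0 < a) (hb : 0 < b)
    (hab : a + b = 1) :
    φ (a • q + b • r) p * ψ q r = φ q r * ψ (a • q + b • r) p := by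
  set m := a • q + b • r
  have hm : m ∈ S := hS hq hr ha.le hb.le hab
  have hφq := hφ.apply_smul_add_smul_self_left a b q r
  have hφr := hφ.apply_smul_add_smul_self_right a b q r
  have hψq := hψ.apply_smul_add_smul_self_left a b q r
  have hψr := hψ.apply_smul_add_smul_self_right a b q r
  have hqr : φ m q * φ m r ≤ 0 := by
    rw [hφq, hφr]
    nlinarith [mul_pos ha hb, sq_nonneg (φ q r)]
  obtain hpq | hpr : φ m p * φ m q ≤ 0 ∨ φ m p * φ m r ≤ 0 := by
    by_contra! h
    nlinarith [mul_pos h.1 h.2, sq_nonneg (φ m p)]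
  · have := apply_mul_apply_eq_of_mul_nonpos hS hzero hm hp hq hpq
    rw [hφq, hψq] at this
    exact mul_left_cancel₀ hb.ne' (by linear_combination -this)
  · have := apply_mul_apply_eq_of_mul_nonpos hS hzero hm hp hr hpr
    rw [hφr, hψr] at this
    exact mul_left_cancel₀ ha.ne' (by linear_combination this)

theorem apply_mul_apply_eq (hφ : φ.IsAlt) (hψ : ψ.IsAlt) (hS : Convex 𝕜 S)
    (hzero : ∀ x ∈ S, ∀ y ∈ S, φ x y = 0 → ψ x y = 0) {x y z : E}
    (hx : x ∈ S) (hy : y ∈ S) (hz : z ∈ S) :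
    φ x y * ψ x z = φ x z * ψ x y := by
  have h₁ := apply_smul_add_smul_mul_eq hφ hψ hS hzero hy hx hz
    (a := 1 / 2) (b := 1 / 2) (by norm_num) (by norm_num) (by norm_num)
  have h₂ := apply_smul_add_smul_mul_eq hφ hψ hS hzero hy hx hz
    (a := 2 / 3) (b := 1 / 3) (by norm_num) (by norm_num) (by norm_num)
  simp only [map_add₂, map_smul₂, smul_eq_mul] at h₁ h₂
  linear_combination 3 * h₂ - 2 * h₁

theorem eq_div_mul_of_apply_ne_zero (hφ : φ.IsAlt) (hψ : ψ.IsAlt) (hS : Convex 𝕜 S)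
    (hzero : ∀ x ∈ S, ∀ y ∈ S, φ x y = 0 → ψ x y = 0) {p q : E} (hp : p ∈ S) (hq : q ∈ S)
    (hpq : φ p q ≠ 0) {x y : E} (hx : x ∈ S) (hy : y ∈ S) :
    ψ x y = ψ p q / φ p q * φ x y := by
  set α := ψ p q / φ p q
  have hα : ψ p q = α * φ p q := (div_mul_cancel₀ _ hpq).symm
  have row : ∀ x ∈ S, ∀ y ∈ S, φ x y ≠ 0 → ψ x y = α * φ x y →
      ∀ z ∈ S, ψ x z = α * φ x z := fun x hx y hy hxy hψxy z hz =>
    mul_left_cancel₀ hxy (by rw [apply_mul_apply_eq hφ hψ hS hzero hx hy hz, hψxy]; ring)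
  have row_q := row q hq p hp (by rw [← hφ.neg_eq]; exact neg_ne_zero.2 hpq)
    (by rw [← hφ.neg_eq, ← hψ.neg_eq, hα, mul_neg])
  have row_of_ne : ∀ x ∈ S, φ x q ≠ 0 → ∀ z ∈ S, ψ x z = α * φ x z := fun x hx hxq =>
    row x hx q hq hxq (by rw [← hφ.neg_eq, ← hψ.neg_eq, row_q x hx, mul_neg])
  by_cases hxq : φ x q = 0
  · set x' := (1 / 2 : 𝕜) • x + (1 / 2 : 𝕜) • p
    have hx' : x' ∈ S := hS hx hp (by norm_num) (by norm_num) (by norm_num)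
    have hx'q : φ x' q ≠ 0 := by
      simpa [x', hxq] using hpq
    have hx'y := row_of_ne x' hx' hx'q y hy
    simp only [x', map_add₂, map_smul₂, smul_eq_mul] at hx'y
    linear_combination 2 * hx'y - row_of_ne p hp hpq y hy
  · exact row_of_ne x hx hxq y hy

theorem exists_eq_mul_of_zero_imp_zero (hφ : φ.IsAlt) (hψ : ψ.IsAlt) (hS : Convex 𝕜 S)
    (hzero : ∀ x ∈ S, ∀ y ∈ S, φ x y = 0 → ψ x y = 0) :
    ∃ α : 𝕜, ∀ x ∈ S, ∀ y ∈ S, ψ x y = α * φ x y := by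
  by_cases hφ0 : ∃ p ∈ S, ∃ q ∈ S, φ p q ≠ 0
  · obtain ⟨p, hp, q, hq, hpq⟩ := hφ0
    exact ⟨_, fun x hx y hy => eq_div_mul_of_apply_ne_zero hφ hψ hS hzero hp hq hpq hx hy⟩
  · push Not at hφ0
    exact ⟨0, fun x hx y hy => by rw [hzero x hx y hy (hφ0 x hx y hy), zero_mul]⟩

end LinearMap.BilinForm

theorem phi_eq_toBilin' {U : Type*} [Fintype U] [DecidableEq U] (M : U → U → ℝ)
    (p q : U → ℝ) : phi M p q = Matrix.toBilin' (Matrix.of M) p q := by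
  simp only [phi, Matrix.toBilin'_apply, Matrix.of_apply, mul_right_comm]

theorem isAlt_toBilin'_of_eq_neg {U : Type*} [Fintype U] [DecidableEq U] {M : U → U → ℝ}
    (hM : ∀ a b, M a b = - M b a) : (Matrix.toBilin' (Matrix.of M)).IsAlt := by
  intro x
  have hskew : Matrix.toBilin' (Matrix.of M) x x = -Matrix.toBilin' (Matrix.of M) x x := by
    simp only [Matrix.toBilin'_apply, Matrix.of_apply]
    conv_lhs => rw [Finset.sum_comm]
    simp only [← Finset.sum_neg_distrib]
    refine Finset.sum_congr rfl fun a _ => Finset.sum_congr rfl fun b _ => ?_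
    rw [hM]; ring
  linarith

theorem ssb_indifference_determines_general {U : Type*} [Fintype U]
    (M N : U → U → ℝ) (hM : ∀ a b, M a b = - M b a) (hN : ∀ a b, N a b = - N b a)
    (hsub : ∀ p ∈ stdSimplex ℝ U, ∀ q ∈ stdSimplex ℝ U,
      phi M p q = 0 → phi N p q = 0) :
    ∃ α : ℝ, ∀ p ∈ stdSimplex ℝ U, ∀ q ∈ stdSimplex ℝ U,
      phi N p q = α * phi M p q := by
  classical
  simp only [phi_eq_toBilin'] at hsub ⊢
  exact LinearMap.BilinForm.exists_eq_mul_of_zero_imp_zero (isAlt_toBilin'_of_eq_neg hM)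
    (isAlt_toBilin'_of_eq_neg hN) (convex_stdSimplex ℝ U) hsub

/-- Fishburn–Gehrlein: if the indifference relation of a nonzero SSB function φ
is contained in that of ψ, then ψ is a scalar multiple of φ (so the relation
represented by ψ is ≻, ≻⁻¹, or complete indifference). -/
theorem ssb_indifference_determines {U : Type*} [Fintype U]
    (M N : U → U → ℝ) (hM : ∀ a b, M a b = - M b a) (hN : ∀ a b, N a b = - N b a)
    (hnz : ∃ p ∈ stdSimplex ℝ U, ∃ q ∈ stdSimplex ℝ U, phi M p q ≠ 0)
    (hsub : ∀ p ∈ stdSimplex ℝ U, ∀ q ∈ stdSimplex ℝ U,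
      phi M p q = 0 → phi N p q = 0) :
    ∃ α : ℝ, ∀ p ∈ stdSimplex ℝ U, ∀ q ∈ stdSimplex ℝ U,
      phi N p q = α * phi M p q :=
  ssb_indifference_determines_general M N hM hN hsub
end
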